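/- Let Ω ⊂ ℝ^N be a bounded domain with smooth boundary, β_Ω > 1 its smallest Dirichlet eigenvalue with positive eigenfunction φ_Ω, 1/β_Ω < τ < 1, and ρ > 0 with c₄ > 0 such that φ_Ω ≥ c₄ on E_ρ = Ω \ Ω_ρ. If ε > 0 satisfies (1 − τβ_Ω)c₄ + ε ≤ 0, then ψ(x) = δ(φ_Ω(x) + ε)^τ satisfies Δψ + ψ − ψ^p ≤ 0 in E_ρ for every δ > 0 and p > 1. -/

import Mathlib

/-! Write `ψ = g ∘ φΩ` with `g t = δ (t + ε)^τ`, so that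
`Δψ = g''(φΩ) |∇φΩ|² + g'(φΩ) ΔφΩ`. Since `τ < 1`, `g` is concave and the gradient term is
nonpositive. Using `ΔφΩ = -β φΩ`, the remaining part of `Δψ + ψ` equals
`δ (φΩ + ε)^(τ-1) ((1 - τβ) φΩ + ε)`, which is `≤ δ (φΩ + ε)^(τ-1) ((1 - τβ) c₄ + ε) ≤ 0`
on `E_ρ` because `τβ > 1` and `φΩ ≥ c₄` there. Finally `ψ^p ≥ 0`. -/

open MeasureTheory Real Filter Topology Metric

noncomputable section

/-- `ℝ^N`. -/
abbrev Euc (N : ℕ) := EuclideanSpace ℝ (Fin N)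

/-- The Laplacian `Δu = ∑ i ∂²u/∂xᵢ²`. -/
def lap {N : ℕ} (u : Euc N → ℝ) (x : Euc N) : ℝ :=
  ∑ i, fderiv ℝ (fun y => fderiv ℝ u y (EuclideanSpace.single i 1)) x (EuclideanSpace.single i 1)

section ChainRule

variable {E : Type*} [NormedAddCommGroup E] [NormedSpace ℝ E] {u : E → ℝ} {x : E}
  {f f' : ℝ → ℝ} {f'' : ℝ}

theorem fderiv_fderiv_comp_apply_apply (hu : ContDiffAt ℝ 2 u x)
    (hf : ∀ᶠ t in 𝓝 (u x), HasDerivAt f (f' t) t) (hf' : HasDerivAt f' f'' (u x)) (v : E) :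
    fderiv ℝ (fun y => fderiv ℝ (fun z => f (u z)) y v) x v =
      f'' * fderiv ℝ u x v ^ 2 + f' (u x) * fderiv ℝ (fun y => fderiv ℝ u y v) x v := by
  have hfirst : (fun y => fderiv ℝ (fun z => f (u z)) y v) =ᶠ[𝓝 x]
      fun y => f' (u y) * fderiv ℝ u y v := by
    filter_upwards [hu.eventually (by simp), hu.continuousAt.tendsto.eventually hf]
      with y huy hfy
    have hfu : HasFDerivAt (fun z => f (u z)) (f' (u y) • fderiv ℝ u y) y :=
      hfy.comp_hasFDerivAt y (huy.differentiableAt two_ne_zero).hasFDerivAt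
    simp [hfu.fderiv]
  have hf'u : HasFDerivAt (fun y => f' (u y)) (f'' • fderiv ℝ u x) x :=
    hf'.comp_hasFDerivAt x (hu.differentiableAt two_ne_zero).hasFDerivAt
  have hdu : DifferentiableAt ℝ (fun y => fderiv ℝ u y v) x :=
    ((hu.fderiv_right (m := 1) le_rfl).differentiableAt one_ne_zero).clm_apply
      (differentiableAt_const v)
  rw [hfirst.fderiv_eq, fderiv_fun_mul hf'u.differentiableAt hdu, hf'u.fderiv]
  simp only [add_apply, smul_apply, smul_eq_mul]
  ring

end ChainRule

theorem lap_comp {N : ℕ} {u : Euc N → ℝ} {x : Euc N} {f f' : ℝ → ℝ} {f'' : ℝ}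
    (hu : ContDiffAt ℝ 2 u x) (hf : ∀ᶠ t in 𝓝 (u x), HasDerivAt f (f' t) t)
    (hf' : HasDerivAt f' f'' (u x)) :
    lap (fun y => f (u y)) x =
      f'' * ∑ i, fderiv ℝ u x (EuclideanSpace.single i 1) ^ 2 + f' (u x) * lap u x := by
  simp only [lap, fderiv_fderiv_comp_apply_apply hu hf hf', Finset.sum_add_distrib,
    Finset.mul_sum]

theorem hasDerivAt_rpow_add_const {ε τ t : ℝ} (ht : 0 < t + ε) :
    HasDerivAt (fun s => (s + ε) ^ τ) (τ * (t + ε) ^ (τ - 1)) t := by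
  simpa using ((hasDerivAt_id t).add_const ε).rpow_const (p := τ) (Or.inl ht.ne')

theorem lap_const_mul_rpow_add_const {N : ℕ} {u : Euc N → ℝ} {x : Euc N} {δ ε τ : ℝ}
    (hu : ContDiffAt ℝ 2 u x) (hx : 0 < u x + ε) :
    lap (fun y => δ * (u y + ε) ^ τ) x =
      δ * τ * (τ - 1) * (u x + ε) ^ (τ - 2) * ∑ i, fderiv ℝ u x (EuclideanSpace.single i 1) ^ 2
        + δ * τ * (u x + ε) ^ (τ - 1) * lap u x := by
  have hf : ∀ᶠ t in 𝓝 (u x), HasDerivAt (fun s => δ * (s + ε) ^ τ)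
      (δ * (τ * (t + ε) ^ (τ - 1))) t := by
    filter_upwards [(continuous_add_const ε).continuousAt.eventually (lt_mem_nhds hx)]
      with t ht using (hasDerivAt_rpow_add_const ht).const_mul δ
  rw [lap_comp hu hf (((hasDerivAt_rpow_add_const hx).const_mul τ).const_mul δ)]
  ring_nf

theorem mul_rpow_sub_one_mul_add_rpow_nonpos {A τ L : ℝ} (hA : 0 < A) (h : τ * L + A ≤ 0) :
    τ * A ^ (τ - 1) * L + A ^ τ ≤ 0 := by
  have hsplit : A ^ τ = A ^ (τ - 1) * A := by
    rw [← rpow_add_one hA.ne', sub_add_cancel]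
  have hpos : 0 < A ^ (τ - 1) := rpow_pos_of_pos hA _
  calc τ * A ^ (τ - 1) * L + A ^ τ = A ^ (τ - 1) * (τ * L + A) := by rw [hsplit]; ring
    _ ≤ 0 := mul_nonpos_of_nonneg_of_nonpos hpos.le h

theorem stmt15_general {N : ℕ} (Ω : Set (Euc N)) (hΩo : IsOpen Ω)
    (β τ ρ c₄ ε : ℝ) (hβ : 1 < β) (hτl : 1 / β < τ) (hτu : τ < 1)
    (hε : 0 < ε)
    (φΩ : Euc N → ℝ)
    -- φΩ is the positive first Dirichlet eigenfunction with eigenvalue β = β_Ω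
    (hφpos : ∀ x ∈ Ω, 0 < φΩ x)
    (hφeig : ∀ x ∈ Ω, -lap φΩ x = β * φΩ x)
    (hφreg : ContDiffOn ℝ 2 φΩ (closure Ω))
    -- φΩ ≥ c₄ on E_ρ = Ω \ Ω_ρ
    (hlow : ∀ x ∈ Ω, ρ ≤ infDist x (frontier Ω) → c₄ ≤ φΩ x)
    -- smallness of ε
    (hsmall : (1 - τ * β) * c₄ + ε ≤ 0) :
    ∀ δ : ℝ, 0 < δ → ∀ p : ℝ, 1 < p → ∀ x ∈ Ω, ρ ≤ infDist x (frontier Ω) →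
      lap (fun y => δ * (φΩ y + ε) ^ τ) x + δ * (φΩ x + ε) ^ τ
        - (δ * (φΩ x + ε) ^ τ) ^ p ≤ 0 := by
  intro δ hδ p _ x hx hxρ
  have hβ0 : 0 < β := one_pos.trans hβ
  have hτβ : 1 < τ * β := by rwa [one_div, inv_lt_iff_one_lt_mul₀ hβ0] at hτl
  have hτ : 0 < τ := (one_div_pos.mpr hβ0).trans hτl
  have hA : 0 < φΩ x + ε := add_pos (hφpos x hx) hε
  have hφ : ContDiffAt ℝ 2 φΩ x :=
    hφreg.contDiffAt (Filter.mem_of_superset (hΩo.mem_nhds hx) subset_closure)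
  have hgrad : δ * τ * (τ - 1) * (φΩ x + ε) ^ (τ - 2) *
      ∑ i, fderiv ℝ φΩ x (EuclideanSpace.single i 1) ^ 2 ≤ 0 := by
    have hconcave : δ * τ * (τ - 1) ≤ 0 :=
      mul_nonpos_of_nonneg_of_nonpos (by positivity) (by linarith)
    exact mul_nonpos_of_nonpos_of_nonneg
      (mul_nonpos_of_nonpos_of_nonneg hconcave (by positivity))
      (Finset.sum_nonneg fun i _ => sq_nonneg _)
  have heig : τ * lap φΩ x + (φΩ x + ε) ≤ 0 := by
    nlinarith [hφeig x hx, hlow x hx hxρ]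
  have hlin := mul_le_mul_of_nonneg_left
    (mul_rpow_sub_one_mul_add_rpow_nonpos hA heig) hδ.le
  rw [lap_const_mul_rpow_add_const hφ hA]
  have hψp : 0 ≤ (δ * (φΩ x + ε) ^ τ) ^ p := by positivity
  linarith

/-- with `β_Ω > 1`, `1/β_Ω < τ < 1`, `φΩ ≥ c₄ > 0` on
`E_ρ = Ω \ Ω_ρ`, and `ε > 0` with `(1 − τβ_Ω)c₄ + ε ≤ 0`, the function
`ψ = δ(φΩ + ε)^τ` satisfies `Δψ + ψ − ψ^p ≤ 0` in `E_ρ` for every `δ > 0`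
and `p > 1`. -/
theorem stmt15 {N : ℕ} (Ω : Set (Euc N)) (hΩo : IsOpen Ω) (hΩc : IsConnected Ω)
    (hΩb : Bornology.IsBounded Ω)
    (β τ ρ c₄ ε : ℝ) (hβ : 1 < β) (hτl : 1 / β < τ) (hτu : τ < 1)
    (hρ : 0 < ρ) (hc₄ : 0 < c₄) (hε : 0 < ε)
    (φΩ : Euc N → ℝ)
    -- φΩ is the positive first Dirichlet eigenfunction with eigenvalue β = β_Ω
    (hφpos : ∀ x ∈ Ω, 0 < φΩ x)
    (hφbdry : ∀ x ∈ frontier Ω, φΩ x = 0)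
    (hφeig : ∀ x ∈ Ω, -lap φΩ x = β * φΩ x)
    (hφreg : ContDiffOn ℝ 2 φΩ (closure Ω))
    -- φΩ ≥ c₄ on E_ρ = Ω \ Ω_ρ
    (hlow : ∀ x ∈ Ω, ρ ≤ infDist x (frontier Ω) → c₄ ≤ φΩ x)
    -- smallness of ε
    (hsmall : (1 - τ * β) * c₄ + ε ≤ 0) :
    ∀ δ : ℝ, 0 < δ → ∀ p : ℝ, 1 < p → ∀ x ∈ Ω, ρ ≤ infDist x (frontier Ω) →
      lap (fun y => δ * (φΩ y + ε) ^ τ) x + δ * (φΩ x + ε) ^ τ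
        - (δ * (φΩ x + ε) ^ τ) ^ p ≤ 0 :=
  stmt15_general Ω hΩo β τ ρ c₄ ε hβ hτl hτu hε φΩ hφpos hφeig hφreg hlow hsmall
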